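/- arXiv:2602.08704 — 2 statements merged into one kernel-verified Lean document; each statement's English description precedes it below -/
import Mathlib

section
/- Fix k ∈ Ω and for u ∈ ℝ let S(u) be the diagonal matrix obtained from S_Ω by replacing its k-th diagonal entry with u, and define v(u) := (I_Ω − S(u) W_ΩΩ)^{-1} (S(u) W_Ω∂ ψ + (I_Ω − S(u)) φ) wherever I_Ω − S(u) W_ΩΩ is invertible. If I_Ω − S_Ω W_ΩΩ is invertible, then u ↦ v(u) is differentiable at u = s_k with derivative v'(s_k) = G_S E_k (W_ΩΩ v_Ω^* + W_Ω∂ ψ − φ) = ((W_ΩΩ v_Ω^* + W_Ω∂ ψ − φ)_k) · G_S e_k, where G_S = (I_Ω − S_Ω W_ΩΩ)^{-1}, v_Ω^* = v(s_k), E_k = e_k e_k^T, and e_k is the k-th standard basis vector of ℝ^Ω. -/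
/-!
Write `v(u) = A(u)⁻¹ b(u)` with `A(u) = I - S(u) W_ΩΩ` and `b(u) = φ + S(u) (W_Ω∂ ψ - φ)`.
Both are affine in `u`, with derivatives `-E_k W_ΩΩ` and `E_k (W_Ω∂ ψ - φ)`, and the inverse
has derivative `-A⁻¹ A' A⁻¹`; so `v' = G_S (b' - A' v*) = G_S E_k (W_ΩΩ v* + W_Ω∂ ψ - φ)`.
-/

open Matrix

section MatrixCalculus

-- Derivatives only see the product topology; the ℓ∞ operator norm is just a convenient norm
-- that makes square matrices a complete normed algebra.
attribute [local instance] Matrix.linftyOpNormedAddCommGroup Matrix.linftyOpNormedSpace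
  Matrix.linftyOpNormedRing Matrix.linftyOpNormedAlgebra

variable {𝕜 : Type*} [NontriviallyNormedField 𝕜] {m n : Type*} [Fintype m] [Fintype n]

theorem hasDerivAt_diagonal_update [DecidableEq n] (s : n → 𝕜) (k : n) (x : 𝕜) :
    HasDerivAt (fun u => diagonal (Function.update s k u)) (single k k 1) x := by
  have hdecomp : ∀ u, diagonal (Function.update s k u) =
      diagonal (Function.update s k 0) + u • single k k 1 := by
    intro u
    have hupdate : Function.update s k u = Function.update s k 0 + u • Pi.single k 1 := by
      ext i
      rcases eq_or_ne i k with rfl | hik <;> simp [*]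
    rw [hupdate, ← diagonal_single, ← diagonal_smul]
    exact (diagonal_add _ _).symm
  exact (((hasDerivAt_id x).smul_const (single k k (1 : 𝕜))).const_add _).congr_deriv
    (one_smul _ _) |>.congr_of_eventuallyEq (.of_forall hdecomp)

theorem hasDerivAt_one_sub_diagonal_update_mul [DecidableEq n] (s : n → 𝕜) (k : n)
    (W : Matrix n n 𝕜) (x : 𝕜) :
    HasDerivAt (fun u => 1 - diagonal (Function.update s k u) * W) (-(single k k 1 * W)) x :=
  ((hasDerivAt_diagonal_update s k x).mul_const W).const_sub 1

variable [CompleteSpace 𝕜]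

theorem HasDerivAt.matrix_mulVec {A : 𝕜 → Matrix m n 𝕜} {A' : Matrix m n 𝕜} {b : 𝕜 → n → 𝕜}
    {b' : n → 𝕜} {x : 𝕜} (hA : HasDerivAt A A' x) (hb : HasDerivAt b b' x) :
    HasDerivAt (fun u => A u *ᵥ b u) (A x *ᵥ b' + A' *ᵥ b x) x :=
  let mulVecCLM : Matrix m n 𝕜 →L[𝕜] (n → 𝕜) →L[𝕜] (m → 𝕜) :=
    LinearMap.toContinuousLinearMap
      (LinearMap.toContinuousLinearMap.toLinearMap ∘ₗ mulVecBilin 𝕜 𝕜)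
  mulVecCLM.hasDerivAt_of_bilinear (fun _ => hA) (fun _ => hb)

theorem HasDerivAt.matrix_inv [DecidableEq n] {A : 𝕜 → Matrix n n 𝕜} {A' : Matrix n n 𝕜} {x : 𝕜}
    (hA : HasDerivAt A A' x) (hx : IsUnit (A x)) :
    HasDerivAt (fun u => (A u)⁻¹) (-((A x)⁻¹ * A' * (A x)⁻¹)) x := by
  -- completeness has to be stated for the uniformity of the operator norm
  have : HasSummableGeomSeries (Matrix n n 𝕜) :=
    @instHasSummableGeomSeriesOfCompleteSpace _ _ (FiniteDimensional.complete 𝕜 _)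
  obtain ⟨U, hU⟩ := hx
  have hinv := (hU ▸ hasFDerivAt_ringInverse (𝕜 := 𝕜) U).comp_hasDerivAt x hA
  simp only [nonsing_inv_eq_ringInverse, ← hU, Ring.inverse_unit]
  exact hinv

theorem HasDerivAt.matrix_inv_mulVec [DecidableEq n] {A : 𝕜 → Matrix n n 𝕜} {A' : Matrix n n 𝕜}
    {b : 𝕜 → n → 𝕜} {b' : n → 𝕜} {x : 𝕜} (hA : HasDerivAt A A' x) (hb : HasDerivAt b b' x)
    (hx : IsUnit (A x)) :
    HasDerivAt (fun u => (A u)⁻¹ *ᵥ b u) ((A x)⁻¹ *ᵥ (b' - A' *ᵥ ((A x)⁻¹ *ᵥ b x))) x := by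
  convert (hA.matrix_inv hx).matrix_mulVec hb using 1
  simp only [mulVec_sub, neg_mulVec, mulVec_mulVec, Matrix.mul_assoc]
  abel

end MatrixCalculus

theorem steady_state_sensitivity_general
    {Ω B : Type*} [Fintype Ω] [Fintype B] [DecidableEq Ω]
    (Wii : Matrix Ω Ω ℝ) (Wib : Matrix Ω B ℝ)
    (s : Ω → ℝ)
    (φ : Ω → ℝ) (ψ : B → ℝ) (k : Ω)
    (S : ℝ → Matrix Ω Ω ℝ)
    (hS : ∀ u : ℝ, S u = Matrix.diagonal (Function.update s k u))
    (v : ℝ → Ω → ℝ)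
    (hv : ∀ u : ℝ, v u = ((1 : Matrix Ω Ω ℝ) - S u * Wii)⁻¹.mulVec
        ((S u * Wib).mulVec ψ + ((1 : Matrix Ω Ω ℝ) - S u).mulVec φ))
    (hinv : IsUnit ((1 : Matrix Ω Ω ℝ) - Matrix.diagonal s * Wii))
    (GS : Matrix Ω Ω ℝ)
    (hGS : GS = ((1 : Matrix Ω Ω ℝ) - Matrix.diagonal s * Wii)⁻¹)
    (vstar : Ω → ℝ) (hvstar : vstar = v (s k)) :
    HasDerivAt v
      (GS.mulVec ((Matrix.single k k (1 : ℝ)).mulVec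
        (Wii.mulVec vstar + Wib.mulVec ψ - φ))) (s k)
    ∧ GS.mulVec ((Matrix.single k k (1 : ℝ)).mulVec
          (Wii.mulVec vstar + Wib.mulVec ψ - φ))
        = (Wii.mulVec vstar + Wib.mulVec ψ - φ) k • GS.mulVec (Pi.single k 1) := by
  have hv_eq : v = fun u => (1 - diagonal (Function.update s k u) * Wii)⁻¹ *ᵥ
      (φ + diagonal (Function.update s k u) *ᵥ (Wib *ᵥ ψ - φ)) := by
    funext u
    rw [hv, hS]
    congr 1
    simp only [← mulVec_mulVec, sub_mulVec, one_mulVec, mulVec_sub]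
    abel
  subst hv_eq hvstar hGS
  have hunit : IsUnit (1 - diagonal (Function.update s k (s k)) * Wii) := by
    rwa [Function.update_eq_self]
  have hsource := ((hasDerivAt_diagonal_update s k (s k)).matrix_mulVec
    (hasDerivAt_const _ (Wib *ᵥ ψ - φ))).const_add φ
  have hderiv :=
    (hasDerivAt_one_sub_diagonal_update_mul s k Wii (s k)).matrix_inv_mulVec hsource hunit
  refine ⟨hderiv.congr_deriv ?_, by rw [single_mulVec_eq, one_mul, mulVec_smul]⟩
  beta_reduce
  rw [Function.update_eq_self, mulVec_zero, zero_add, neg_mulVec, sub_neg_eq_add,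
    ← mulVec_mulVec, ← mulVec_add]
  congr 2
  abel

/-- **Sensitivity of the steady state to a susceptibility parameter.**  With
`S(u)` the susceptibility matrix whose `k`-th diagonal entry is replaced by `u` and
`v(u) = (I − S(u) W_ΩΩ)⁻¹ (S(u) W_Ω∂ ψ + (I − S(u)) φ)`, if `I − S_Ω W_ΩΩ` is
invertible then `u ↦ v(u)` is differentiable at `u = s_k` with derivative
`G_S E_k (W_ΩΩ v_Ω^* + W_Ω∂ ψ − φ) = ((W_ΩΩ v_Ω^* + W_Ω∂ ψ − φ)_k) • G_S e_k`. -/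
theorem steady_state_sensitivity
    {Ω B : Type*} [Fintype Ω] [Fintype B] [DecidableEq Ω] [DecidableEq B]
    [Nonempty Ω] [Nonempty B]
    (Wii : Matrix Ω Ω ℝ) (Wib : Matrix Ω B ℝ)
    (s : Ω → ℝ) (hs : ∀ i, s i ∈ Set.Icc (0 : ℝ) 1)
    (φ : Ω → ℝ) (ψ : B → ℝ) (k : Ω)
    (S : ℝ → Matrix Ω Ω ℝ)
    (hS : ∀ u : ℝ, S u = Matrix.diagonal (Function.update s k u))
    (v : ℝ → Ω → ℝ)
    (hv : ∀ u : ℝ, v u = ((1 : Matrix Ω Ω ℝ) - S u * Wii)⁻¹.mulVec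
        ((S u * Wib).mulVec ψ + ((1 : Matrix Ω Ω ℝ) - S u).mulVec φ))
    (hinv : IsUnit ((1 : Matrix Ω Ω ℝ) - Matrix.diagonal s * Wii))
    (GS : Matrix Ω Ω ℝ)
    (hGS : GS = ((1 : Matrix Ω Ω ℝ) - Matrix.diagonal s * Wii)⁻¹)
    (vstar : Ω → ℝ) (hvstar : vstar = v (s k)) :
    HasDerivAt v
      (GS.mulVec ((Matrix.single k k (1 : ℝ)).mulVec
        (Wii.mulVec vstar + Wib.mulVec ψ - φ))) (s k)
    ∧ GS.mulVec ((Matrix.single k k (1 : ℝ)).mulVec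
          (Wii.mulVec vstar + Wib.mulVec ψ - φ))
        = (Wii.mulVec vstar + Wib.mulVec ψ - φ) k • GS.mulVec (Pi.single k 1) :=
  steady_state_sensitivity_general Wii Wib s φ ψ k S hS v hv hinv GS hGS vstar hvstar
end

section
/- Let W be row-stochastic with nonnegative entries, and let S_Ω = diag(s_i) and S_Ω' = diag(s_i') with 0 ≤ s_i ≤ s_i' ≤ 1 for all i ∈ Ω. Assume ρ(S_Ω' W_ΩΩ) < 1 (hence also ρ(S_Ω W_ΩΩ) < 1). Then the influence matrices U := (I_Ω − S_Ω W_ΩΩ)^{-1} S_Ω W_Ω∂ and U' := (I_Ω − S_Ω' W_ΩΩ)^{-1} S_Ω' W_Ω∂ satisfy U_{jk} ≤ U'_{jk} for all j ∈ Ω, k ∈ ∂Ω. -/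
/-!
Both `S W_ΩΩ ≤ S' W_ΩΩ` and `S W_Ω∂ ≤ S' W_Ω∂` hold entrywise between nonnegative matrices, so the
same holds for all powers of the first pair. By Gelfand's formula, `ρ(S' W_ΩΩ) < 1` makes the
Neumann series `∑ (S' W_ΩΩ)^k` converge, so by comparison `∑ (S W_ΩΩ)^k` converges as well, and
`0 ≤ (I - S W_ΩΩ)⁻¹ ≤ (I - S' W_ΩΩ)⁻¹` entrywise. Multiplying the two entrywise inequalities
between nonnegative matrices gives `U ≤ U'`.
-/

open Matrix

/-- Spectral radius of a real matrix: max modulus of its complex eigenvalues. -/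
noncomputable def specRad {m : Type*} [Fintype m] [DecidableEq m] (A : Matrix m m ℝ) : ℝ :=
  (spectralRadius ℂ (A.map (algebraMap ℝ ℂ))).toReal

open Filter ENNReal

namespace spectrum

variable {A : Type*} [NormedRing A] [NormedAlgebra ℂ A] [CompleteSpace A]

theorem spectralRadius_lt_top (a : A) : spectralRadius ℂ a < ∞ :=
  (spectralRadius_le_pow_nnnorm_pow_one_div ℂ a 0).trans_lt <|
    mul_lt_top (by simp) (by simp)

theorem summable_norm_pow_of_spectralRadius_lt_one {a : A} (h : spectralRadius ℂ a < 1) :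
    Summable fun n => ‖a ^ n‖ := by
  obtain ⟨r, hρr, hr1⟩ := ENNReal.lt_iff_exists_nnreal_btwn.mp h
  have hgeom := summable_geometric_of_lt_one r.coe_nonneg (mod_cast hr1)
  refine hgeom.of_norm_bounded_eventually_nat ?_
  filter_upwards [(pow_nnnorm_pow_one_div_tendsto_nhds_spectralRadius a).eventually_lt_const hρr,
    eventually_gt_atTop 0] with n hn hn0
  rw [one_div, ENNReal.rpow_inv_lt_iff (by positivity), ENNReal.rpow_natCast] at hn
  rw [norm_norm]
  exact_mod_cast hn.le

end spectrum

namespace Matrix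

variable {m : Type*} [Fintype m]

section OrderedSemiring

variable {R : Type*} [Semiring R] [PartialOrder R] [IsOrderedRing R] {l n : Type*}

theorem mul_apply_le_mul_apply {A A' : Matrix l m R} {B B' : Matrix m n R}
    (hA : ∀ i j, 0 ≤ A i j) (hAA' : ∀ i j, A i j ≤ A' i j)
    (hB : ∀ i j, 0 ≤ B i j) (hBB' : ∀ i j, B i j ≤ B' i j) (i : l) (k : n) :
    (A * B) i k ≤ (A' * B') i k :=
  Finset.sum_le_sum fun j _ =>
    mul_le_mul (hAA' i j) (hBB' j k) (hB j k) ((hA i j).trans (hAA' i j))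

variable [DecidableEq m]

theorem pow_apply_le_pow_apply {A A' : Matrix m m R} (hA : ∀ i j, 0 ≤ A i j)
    (hAA' : ∀ i j, A i j ≤ A' i j) (n : ℕ) (i j : m) : (A ^ n) i j ≤ (A' ^ n) i j := by
  induction n generalizing i j with
  | zero => rfl
  | succ n ih =>
    rw [pow_succ, pow_succ]
    exact mul_apply_le_mul_apply (pow_apply_nonneg hA n) ih hA hAA' i j

theorem diagonal_mul_apply_nonneg {s : m → R} {M : Matrix m n R} (hs : ∀ i, 0 ≤ s i)
    (hM : ∀ i j, 0 ≤ M i j) (i : m) (j : n) : 0 ≤ (diagonal s * M) i j := by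
  rw [diagonal_mul]
  exact mul_nonneg (hs i) (hM i j)

theorem diagonal_mul_apply_le {s s' : m → R} {M : Matrix m n R} (hss' : ∀ i, s i ≤ s' i)
    (hM : ∀ i j, 0 ≤ M i j) (i : m) (j : n) : (diagonal s * M) i j ≤ (diagonal s' * M) i j := by
  simp only [diagonal_mul]
  exact mul_le_mul_of_nonneg_right (hss' i) (hM i j)

end OrderedSemiring

variable [DecidableEq m]

theorem hasSum_pow_inv_one_sub {R : Type*} [CommRing R] [TopologicalSpace R]
    [IsTopologicalRing R] [T2Space R] {A : Matrix m m R} (h : Summable (A ^ ·)) :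
    HasSum (A ^ ·) (1 - A)⁻¹ := by
  rw [inv_eq_left_inv h.tsum_pow_mul_one_sub]
  exact h.hasSum

section

attribute [local instance] Matrix.linftyOpNormedRing Matrix.linftyOpNormedAlgebra

theorem summable_pow_of_specRad_lt_one {A : Matrix m m ℝ} (h : specRad A < 1) :
    Summable (A ^ ·) := by
  set Ac := A.map (algebraMap ℝ ℂ)
  have hρ : spectralRadius ℂ Ac < 1 := by
    rwa [specRad, ← ENNReal.toReal_one,
      ENNReal.toReal_lt_toReal (spectrum.spectralRadius_lt_top Ac).ne one_ne_top] at h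
  have hc : Summable (Ac ^ ·) := .of_norm (spectrum.summable_norm_pow_of_spectralRadius_lt_one hρ)
  refine Pi.summable.2 fun i => Pi.summable.2 fun j => ?_
  have hij := Pi.summable.1 (Pi.summable.1 hc i) j
  simp only [Ac, ← Matrix.map_pow, map_apply] at hij
  exact Complex.summable_ofReal.mp hij

end

theorem summable_pow_of_le {A A' : Matrix m m ℝ} (hA : ∀ i j, 0 ≤ A i j)
    (hAA' : ∀ i j, A i j ≤ A' i j) (h' : Summable (A' ^ ·)) : Summable (A ^ ·) :=
  Pi.summable.2 fun i => Pi.summable.2 fun j =>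
    (Pi.summable.1 (Pi.summable.1 h' i) j).of_nonneg_of_le (pow_apply_nonneg hA · i j)
      (pow_apply_le_pow_apply hA hAA' · i j)

theorem hasSum_pow_apply_inv_one_sub {A : Matrix m m ℝ} (h : Summable (A ^ ·)) (i j : m) :
    HasSum (fun n => (A ^ n) i j) ((1 - A)⁻¹ i j) :=
  (hasSum_pow_inv_one_sub h).map (entryAddMonoidHom ℝ i j) (continuous_id.matrix_elem i j)

theorem inv_one_sub_apply_nonneg {A : Matrix m m ℝ} (hA : ∀ i j, 0 ≤ A i j)
    (h : Summable (A ^ ·)) (i j : m) : 0 ≤ (1 - A)⁻¹ i j :=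
  (hasSum_pow_apply_inv_one_sub h i j).nonneg (pow_apply_nonneg hA · i j)

theorem inv_one_sub_apply_le {A A' : Matrix m m ℝ} (hA : ∀ i j, 0 ≤ A i j)
    (hAA' : ∀ i j, A i j ≤ A' i j) (h' : Summable (A' ^ ·)) (i j : m) :
    (1 - A)⁻¹ i j ≤ (1 - A')⁻¹ i j :=
  hasSum_le (pow_apply_le_pow_apply hA hAA' · i j)
    (hasSum_pow_apply_inv_one_sub (summable_pow_of_le hA hAA' h') i j)
    (hasSum_pow_apply_inv_one_sub h' i j)

end Matrix

theorem influence_matrix_monotone_general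
    {Ω B : Type*} [Fintype Ω] [DecidableEq Ω]
    (W : Matrix (Ω ⊕ B) (Ω ⊕ B) ℝ)
    (hW0 : ∀ i j, 0 ≤ W i j)
    (s s' : Ω → ℝ)
    (hs0 : ∀ i, 0 ≤ s i) (hss' : ∀ i, s i ≤ s' i)
    (hρ' : specRad (Matrix.diagonal s' * W.toBlocks₁₁) < 1)
    (U U' : Matrix Ω B ℝ)
    (hU : U = ((1 : Matrix Ω Ω ℝ) - Matrix.diagonal s * W.toBlocks₁₁)⁻¹
        * (Matrix.diagonal s * W.toBlocks₁₂))
    (hU' : U' = ((1 : Matrix Ω Ω ℝ) - Matrix.diagonal s' * W.toBlocks₁₁)⁻¹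
        * (Matrix.diagonal s' * W.toBlocks₁₂)) :
    ∀ (j : Ω) (k : B), U j k ≤ U' j k := by
  have hW₁₁ : ∀ i j, 0 ≤ W.toBlocks₁₁ i j := fun _ _ => hW0 _ _
  have hW₁₂ : ∀ i j, 0 ≤ W.toBlocks₁₂ i j := fun _ _ => hW0 _ _
  have hA := diagonal_mul_apply_nonneg hs0 hW₁₁
  have hAA' := diagonal_mul_apply_le hss' hW₁₁
  have hsum' := summable_pow_of_specRad_lt_one hρ'
  subst hU hU'
  exact mul_apply_le_mul_apply
    (inv_one_sub_apply_nonneg hA (summable_pow_of_le hA hAA' hsum'))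
    (inv_one_sub_apply_le hA hAA' hsum')
    (diagonal_mul_apply_nonneg hs0 hW₁₂) (diagonal_mul_apply_le hss' hW₁₂)

/-- **Monotonicity of the influence matrix in susceptibility.**  For row-stochastic
`W` and susceptibility profiles `0 ≤ s ≤ s' ≤ 1` with `ρ(S_Ω' W_ΩΩ) < 1`, the
influence matrices `U = (I − S_Ω W_ΩΩ)⁻¹ S_Ω W_Ω∂` and
`U' = (I − S_Ω' W_ΩΩ)⁻¹ S_Ω' W_Ω∂` satisfy `U_{jk} ≤ U'_{jk}` entrywise. -/
theorem influence_matrix_monotone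
    {Ω B : Type*} [Fintype Ω] [Fintype B] [DecidableEq Ω] [DecidableEq B]
    [Nonempty Ω] [Nonempty B]
    (W : Matrix (Ω ⊕ B) (Ω ⊕ B) ℝ)
    (hW0 : ∀ i j, 0 ≤ W i j) (hW1 : ∀ i, ∑ j, W i j = 1)
    (s s' : Ω → ℝ)
    (hs0 : ∀ i, 0 ≤ s i) (hss' : ∀ i, s i ≤ s' i) (hs'1 : ∀ i, s' i ≤ 1)
    (hρ' : specRad (Matrix.diagonal s' * W.toBlocks₁₁) < 1)
    (U U' : Matrix Ω B ℝ)
    (hU : U = ((1 : Matrix Ω Ω ℝ) - Matrix.diagonal s * W.toBlocks₁₁)⁻¹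
        * (Matrix.diagonal s * W.toBlocks₁₂))
    (hU' : U' = ((1 : Matrix Ω Ω ℝ) - Matrix.diagonal s' * W.toBlocks₁₁)⁻¹
        * (Matrix.diagonal s' * W.toBlocks₁₂)) :
    ∀ (j : Ω) (k : B), U j k ≤ U' j k :=
  influence_matrix_monotone_general W hW0 s s' hs0 hss' hρ' U U' hU hU'
end
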